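/- If m⃗ ≠ (0,…,0) and H_{n,m⃗} ≠ 0, then Problem A has a unique solution up to a scalar: any two Hermite–Padé solutions (Q, P_1,…,P_k) and (Q′, P′_1,…,P′_k) for (n, m⃗) satisfy (Q′, P′_1,…,P′_k) = λ·(Q, P_1,…,P_k) for some nonzero λ ∈ ℂ; moreover every Hermite–Padé solution has Q(0) ≠ 0. -/

import Mathlib

open Polynomial PowerSeries

/-- A Hermite–Padé solution for `(n, m⃗)` and the system `f`: `Q ≠ 0`, `deg Q ≤ m`,
`deg P_j ≤ n_j = n + m − m_j`, and `Q·f_j − P_j = O(z^{n+m+1})` for every `j`. -/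
def IsHermitePadeSolution {k : ℕ} (f : Fin k → PowerSeries ℂ) (n : ℕ) (mv : Fin k → ℕ)
    (Q : Polynomial ℂ) (P : Fin k → Polynomial ℂ) : Prop :=
  Q ≠ 0 ∧ Q.natDegree ≤ ∑ i, mv i ∧
    (∀ j, (P j).natDegree ≤ n + (∑ i, mv i) - mv j) ∧
    ∀ j, ∀ l ≤ n + ∑ i, mv i,
      PowerSeries.coeff (R := ℂ) l ((Q : PowerSeries ℂ) * f j - (P j : PowerSeries ℂ)) = 0

/-- The multiple Hadamard-type determinant `H_{n,m⃗}`: the determinant of the `m × m`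
matrix whose rows are grouped in `k` consecutive blocks (block `j` has `m_j` rows), the
`i`-th row (`i = 0, …, m_j − 1`) of block `j` being
`(f^j_{n−m_j+i+1}, f^j_{n−m_j+i+2}, …, f^j_{n−m_j+i+m})`, with `f^j_p = 0` for `p < 0`. -/
noncomputable def multiHadamardDet {k : ℕ} (f : Fin k → PowerSeries ℂ) (n : ℕ)
    (mv : Fin k → ℕ) : ℂ :=
  Matrix.det (fun r q : Fin (∑ i, mv i) =>
    ∑ j : Fin k,
      if (∑ i : Fin k, if i < j then mv i else 0) ≤ r.val ∧
          r.val < (∑ i : Fin k, if i < j then mv i else 0) + mv j then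
        (if n + 1 + (r.val - ∑ i : Fin k, if i < j then mv i else 0) + q.val < mv j then 0
         else PowerSeries.coeff (R := ℂ)
            (n + 1 + (r.val - ∑ i : Fin k, if i < j then mv i else 0) + q.val - mv j) (f j))
      else 0)

section HermitePadeAux

variable {k : ℕ}


def off (mv : Fin k → ℕ) (j : Fin k) : ℕ := ∑ i : Fin k, if i < j then mv i else 0

lemma off_add (mv : Fin k → ℕ) (j : Fin k) :
    off mv j + mv j = ∑ i : Fin k, if i ≤ j then mv i else 0 := by
  have h : mv j = ∑ i : Fin k, if i = j then mv i else 0 := by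
    rw [Finset.sum_ite_eq' Finset.univ j mv]; simp
  rw [off, h, ← Finset.sum_add_distrib]
  apply Finset.sum_congr rfl
  intro i _
  rcases lt_trichotomy i j with hij | hij | hij
  · simp [hij, hij.le, hij.ne]
  · simp [hij]
  · simp [hij.not_gt, hij.ne', (not_le).mpr hij]

lemma exists_block (mv : Fin k → ℕ) (r : ℕ) (hr : r < ∑ i, mv i) :
    ∃ j : Fin k, off mv j ≤ r ∧ r < off mv j + mv j := by
  have hk : 0 < k := by
    rcases Nat.eq_zero_or_pos k with h | h
    · subst h; simp at hr
    · exact h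
  classical
  set S : Finset (Fin k) := Finset.univ.filter (fun j => off mv j ≤ r) with hS
  have hS0 : (⟨0, hk⟩ : Fin k) ∈ S := by
    simp only [hS, Finset.mem_filter, Finset.mem_univ, true_and]; simp only [off]
    have h0 : ∀ i : Fin k, (if i < (⟨0, hk⟩ : Fin k) then mv i else 0) = 0 := by
      intro i; rw [if_neg]; simp [Fin.lt_def]
    rw [Finset.sum_congr rfl (fun i _ => h0 i)]
    simp
  have hSne : S.Nonempty := ⟨_, hS0⟩
  set j₀ := S.max' hSne with hj₀
  have hj₀S : j₀ ∈ S := S.max'_mem hSne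
  have hj₀le : off mv j₀ ≤ r := by
    simpa [hS] using hj₀S
  refine ⟨j₀, hj₀le, ?_⟩
  by_contra hcon
  push_neg at hcon
  rcases Nat.lt_or_ge (j₀.val + 1) k with hlt | hge
  · -- successor exists
    set j₁ : Fin k := ⟨j₀.val + 1, hlt⟩ with hj₁
    have hoff : off mv j₁ = off mv j₀ + mv j₀ := by
      rw [off_add, off]
      apply Finset.sum_congr rfl
      intro i _
      have hiff : i < j₁ ↔ i ≤ j₀ := by
        rw [Fin.lt_def, Fin.le_def, hj₁]
        exact Nat.lt_succ_iff
      simp only [hiff]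
    have hj₁S : j₁ ∈ S := by
      simp only [hS, Finset.mem_filter, Finset.mem_univ, true_and]
      omega
    have := S.le_max' j₁ hj₁S
    rw [← hj₀] at this
    have : j₀ < j₁ := by simp [Fin.lt_def, hj₁]
    omega
  · -- j₀ is the last index
    have hall : ∀ i : Fin k, i ≤ j₀ := by
      intro i; simp only [Fin.le_def]; omega
    have : off mv j₀ + mv j₀ = ∑ i, mv i := by
      rw [off_add]
      apply Finset.sum_congr rfl
      intro i _; rw [if_pos (hall i)]
    omega

lemma block_le (mv : Fin k → ℕ) {j j' : Fin k} (h : j < j') :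
    off mv j + mv j ≤ off mv j' := by
  rw [off_add, off]
  apply Finset.sum_le_sum
  intro i _
  split_ifs with h1 h2 h2
  · exact le_rfl
  · exact absurd (lt_of_le_of_lt h1 h) h2
  · exact Nat.zero_le _
  · exact Nat.zero_le _

lemma block_unique (mv : Fin k → ℕ) {j j' : Fin k} {r : ℕ}
    (h : off mv j ≤ r ∧ r < off mv j + mv j)
    (h' : off mv j' ≤ r ∧ r < off mv j' + mv j') : j = j' := by
  rcases lt_trichotomy j j' with hjj | hjj | hjj
  · have := block_le mv hjj; omega
  · exact hjj
  · have := block_le mv hjj; omega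

end HermitePadeAux

lemma key {k : ℕ} (f : Fin k → PowerSeries ℂ) (n : ℕ) (mv : Fin k → ℕ)
    (hH : multiHadamardDet f n mv ≠ 0) (R : Polynomial ℂ)
    (hdeg : R.natDegree ≤ ∑ i, mv i) (h0 : R.coeff 0 = 0)
    (heq : ∀ j : Fin k, ∀ i, i < mv j →
      PowerSeries.coeff (R := ℂ) (n + (∑ i, mv i) - mv j + i + 1) ((R : PowerSeries ℂ) * f j) = 0) :
    R = 0 := by
  classical
  set m := ∑ i, mv i with hm
  set A : Matrix (Fin m) (Fin m) ℂ := fun r q =>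
    ∑ j : Fin k,
      if off mv j ≤ r.val ∧ r.val < off mv j + mv j then
        (if n + 1 + (r.val - off mv j) + q.val < mv j then 0
         else PowerSeries.coeff (R := ℂ) (n + 1 + (r.val - off mv j) + q.val - mv j) (f j))
      else 0 with hA
  have hdet : A.det ≠ 0 := hH
  set v : Fin m → ℂ := fun q => R.coeff (m - q.val) with hv
  have hAv : A.mulVec v = 0 := by
    funext r
    obtain ⟨j₀, hj₀⟩ := exists_block mv r.val r.isLt
    have hmvle : mv j₀ ≤ m := by
      rw [hm]
      exact Finset.single_le_sum (fun i _ => Nat.zero_le _) (Finset.mem_univ j₀)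
    set i := r.val - off mv j₀ with hi
    have hilt : i < mv j₀ := by omega
    set l := n + m - mv j₀ + i + 1 with hl'
    have hl := heq j₀ i hilt
    rw [← hl'] at hl
    rw [PowerSeries.coeff_mul, Finset.Nat.sum_antidiagonal_eq_sum_range_succ_mk,
      Finset.sum_range_succ'] at hl
    simp only [Polynomial.coeff_coe, h0, zero_mul, add_zero] at hl
    -- hl : ∑ s in range l, R.coeff (s+1) * coeff (l - (s+1)) (f j₀) = 0
    have hentry : ∀ q : Fin m, A r q =
        (if n + 1 + i + q.val < mv j₀ then 0
         else PowerSeries.coeff (R := ℂ) (n + 1 + i + q.val - mv j₀) (f j₀)) := by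
      intro q
      rw [hA]
      simp only []
      rw [Finset.sum_eq_single j₀]
      · rw [if_pos hj₀]
      · intro b _ hb
        rw [if_neg]
        intro hcon
        exact hb (block_unique mv hcon hj₀)
      · intro h; exact absurd (Finset.mem_univ j₀) h
    show (A.mulVec v) r = 0
    rw [Matrix.mulVec, dotProduct]
    set g : ℕ → ℂ := fun t =>
      (if n + 1 + i + t < mv j₀ then 0
       else PowerSeries.coeff (R := ℂ) (n + 1 + i + t - mv j₀) (f j₀)) * R.coeff (m - t) with hg
    have hsum1 : ∑ q : Fin m, A r q * v q = ∑ t ∈ Finset.range m, g t := by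
      rw [← Fin.sum_univ_eq_sum_range]
      exact Finset.sum_congr rfl (fun q _ => by rw [hentry q])
    rw [hsum1, ← Finset.sum_range_reflect]
    set M := max m l with hM
    set h : ℕ → ℂ := fun t =>
      if t + 1 ≤ l then R.coeff (t + 1) * PowerSeries.coeff (R := ℂ) (l - (t + 1)) (f j₀) else 0
      with hh
    have step1 : ∑ t ∈ Finset.range m, g (m - 1 - t) = ∑ t ∈ Finset.range m, h t := by
      apply Finset.sum_congr rfl
      intro t ht
      rw [Finset.mem_range] at ht
      rw [hg, hh]
      by_cases hc : t + 1 ≤ l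
      · simp only []
        rw [if_neg (by omega), if_pos hc]
        rw [show m - (m - 1 - t) = t + 1 by omega,
          show n + 1 + i + (m - 1 - t) - mv j₀ = l - (t + 1) by omega]
        ring
      · simp only []
        rw [if_pos (by omega), if_neg hc, zero_mul]
    have step2 : ∑ t ∈ Finset.range m, h t = ∑ t ∈ Finset.range M, h t := by
      apply Finset.sum_subset (Finset.range_subset_range.mpr (le_max_left m l))
      intro t _ ht
      rw [Finset.mem_range, not_lt] at ht
      rw [hh]
      simp only []
      split_ifs with hc
      · rw [Polynomial.coeff_eq_zero_of_natDegree_lt (by omega), zero_mul]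
      · rfl
    have step3 : ∑ t ∈ Finset.range M, h t
        = ∑ t ∈ Finset.range l, R.coeff (t + 1) * PowerSeries.coeff (R := ℂ) (l - (t + 1)) (f j₀) := by
      rw [← Finset.sum_subset (Finset.range_subset_range.mpr (le_max_right m l))]
      · apply Finset.sum_congr rfl
        intro t ht
        rw [Finset.mem_range] at ht
        rw [hh]
        simp only []
        rw [if_pos (by omega)]
      · intro t _ ht
        rw [Finset.mem_range, not_lt] at ht
        rw [hh]
        simp only []
        rw [if_neg (by omega)]
    rw [step1, step2, step3, hl]
  have hv0 : v = 0 := by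
    have hu : IsUnit A.det := isUnit_iff_ne_zero.mpr hdet
    calc v = (1 : Matrix (Fin m) (Fin m) ℂ).mulVec v := by rw [Matrix.one_mulVec]
    _ = (A⁻¹ * A).mulVec v := by rw [Matrix.nonsing_inv_mul A hu]
    _ = A⁻¹.mulVec (A.mulVec v) := by rw [Matrix.mulVec_mulVec]
    _ = 0 := by rw [hAv, Matrix.mulVec_zero]
  ext s
  rcases Nat.eq_zero_or_pos s with hs | hs
  · rw [hs, h0, Polynomial.coeff_zero]
  rcases Nat.lt_or_ge m s with hsm | hsm
  · rw [Polynomial.coeff_eq_zero_of_natDegree_lt (by omega), Polynomial.coeff_zero]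
  · have := congrFun hv0 ⟨m - s, by omega⟩
    rw [hv] at this
    simp only [Pi.zero_apply] at this
    rw [show m - (m - s) = s by omega] at this
    rw [this, Polynomial.coeff_zero]

lemma sol_high {k : ℕ} {f : Fin k → PowerSeries ℂ} {n : ℕ} {mv : Fin k → ℕ}
    {Q : Polynomial ℂ} {P : Fin k → Polynomial ℂ}
    (hs : IsHermitePadeSolution f n mv Q P) :
    ∀ j : Fin k, ∀ i, i < mv j →
      PowerSeries.coeff (R := ℂ) (n + (∑ i, mv i) - mv j + i + 1) ((Q : PowerSeries ℂ) * f j) = 0 := by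
  obtain ⟨-, -, hPdeg, hcoef⟩ := hs
  intro j i hi
  have hmvle : mv j ≤ ∑ i, mv i :=
    Finset.single_le_sum (fun i _ => Nat.zero_le _) (Finset.mem_univ j)
  have hd := hPdeg j
  have h1 := hcoef j (n + (∑ i, mv i) - mv j + i + 1) (by omega)
  have h2 : (PowerSeries.coeff (R := ℂ) (n + (∑ i, mv i) - mv j + i + 1))
      ((P j : PowerSeries ℂ)) = 0 := by
    rw [Polynomial.coeff_coe]
    exact Polynomial.coeff_eq_zero_of_natDegree_lt (by omega)
  rw [map_sub, h2, sub_zero] at h1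
  exact h1

/-- If `m⃗ ≠ (0,…,0)` and `H_{n,m⃗} ≠ 0`, then Problem A has a unique solution up to a
scalar: any two Hermite–Padé solutions are proportional by a nonzero `λ ∈ ℂ`; moreover
every Hermite–Padé solution has `Q(0) ≠ 0`. -/
theorem hermite_pade_unique_of_det_ne_zero (k : ℕ) (hk : 1 ≤ k)
    (f : Fin k → PowerSeries ℂ) (n : ℕ) (mv : Fin k → ℕ) (hmv : mv ≠ 0)
    (hH : multiHadamardDet f n mv ≠ 0) :
    (∀ (Q Q' : Polynomial ℂ) (P P' : Fin k → Polynomial ℂ),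
      IsHermitePadeSolution f n mv Q P → IsHermitePadeSolution f n mv Q' P' →
        ∃ lam : ℂ, lam ≠ 0 ∧ Q' = lam • Q ∧ ∀ j, P' j = lam • P j) ∧
    (∀ (Q : Polynomial ℂ) (P : Fin k → Polynomial ℂ),
      IsHermitePadeSolution f n mv Q P → Q.eval 0 ≠ 0) := by
  have part2 : ∀ (Q : Polynomial ℂ) (P : Fin k → Polynomial ℂ),
      IsHermitePadeSolution f n mv Q P → Q.coeff 0 ≠ 0 := by
    intro Q P hs hc0
    exact hs.1 (key f n mv hH Q hs.2.1 hc0 (sol_high hs))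
  refine ⟨?_, fun Q P hs => by
    rw [← Polynomial.coeff_zero_eq_eval_zero]; exact part2 Q P hs⟩
  intro Q Q' P P' hs hs'
  have hQ0 := part2 Q P hs
  have hQ0' := part2 Q' P' hs'
  set lam := Q'.coeff 0 / Q.coeff 0 with hlam
  have hlamne : lam ≠ 0 := div_ne_zero hQ0' hQ0
  have hR : Q' - Polynomial.C lam * Q = 0 := by
    apply key f n mv hH
    · exact le_trans (Polynomial.natDegree_sub_le _ _)
        (max_le hs'.2.1 (le_trans (Polynomial.natDegree_C_mul_le _ _) hs.2.1))
    · rw [Polynomial.coeff_sub, Polynomial.coeff_C_mul, hlam]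
      field_simp
      simp
    · intro j i hi
      have e : ((Q' - Polynomial.C lam * Q : Polynomial ℂ) : PowerSeries ℂ) * f j
          = (Q' : PowerSeries ℂ) * f j
            - PowerSeries.C lam * ((Q : PowerSeries ℂ) * f j) := by
        push_cast [Polynomial.coe_C]; ring
      rw [e, map_sub, sol_high hs' j i hi]
      simp [sol_high hs j i hi]
  have hQQ : Q' = Polynomial.C lam * Q := sub_eq_zero.mp hR
  refine ⟨lam, hlamne, by rw [Polynomial.smul_eq_C_mul]; exact hQQ, ?_⟩
  intro j
  rw [Polynomial.smul_eq_C_mul]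
  obtain ⟨-, -, hPdeg, hcoef⟩ := hs
  obtain ⟨-, -, hPdeg', hcoef'⟩ := hs'
  have e : ((Q' : PowerSeries ℂ)) = PowerSeries.C lam * (Q : PowerSeries ℂ) := by
    rw [hQQ]; push_cast [Polynomial.coe_C]; ring
  ext p
  rw [Polynomial.coeff_C_mul]
  rcases Nat.lt_or_ge (n + ∑ i, mv i) p with hp | hp
  · have hd := hPdeg j
    have hd' := hPdeg' j
    rw [Polynomial.coeff_eq_zero_of_natDegree_lt (p := P' j) (by omega),
      Polynomial.coeff_eq_zero_of_natDegree_lt (p := P j) (by omega), mul_zero]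
  · have h1 := hcoef' j p hp
    have h2 := hcoef j p hp
    rw [map_sub, sub_eq_zero] at h1 h2
    have key1 : PowerSeries.coeff (R := ℂ) p ((Q' : PowerSeries ℂ) * f j)
        = lam * PowerSeries.coeff (R := ℂ) p ((Q : PowerSeries ℂ) * f j) := by
      rw [e, mul_assoc]
      simp
    rw [← Polynomial.coeff_coe, ← Polynomial.coeff_coe, ← h1, ← h2, key1]
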